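/- Let Ω ⊂ ℝⁿ be a bounded domain with diameter D and let T > 0. Let X(x, t) be a time-dependent vector field on Ω × [0, T], C² in x and C¹ in t, satisfying (∂/∂t − Δ)X(x, t) = −2∇_{X(x,t)} X(x, t) + V(x, X(x, t)), where V : Ω × ℝⁿ → ℝⁿ is C¹ and for each t ∈ [0, T] the vector field x ↦ V(x, X(x, t)) has ω : [0, ∞) → ℝ as a modulus of expansion. Let ψ(s, t) be a C^{2,1} function on [0, D/2) × [0, T] with ψ(0, t) = 0 and ψ'(s, t) < 0 (prime denoting ∂/∂s), satisfying ψ_t − ψ'' ≥ 2ψ'ψ − ω. Define C(x, y, t) = ⟨X(y, t) − X(x, t), (y − x)/|y − x|⟩ + 2ψ(|y − x|/2, t) for x ≠ y, and C(x, x, t) = 0. Then C cannot attain a negative minimum in the parabolic interior: there is no (x₀, y₀, t₀) with x₀, y₀ ∈ Ω and t₀ ∈ (0, T] such that C(x₀, y₀, t₀) < 0 and C(x₀, y₀, t₀) ≤ C(x, y, t) for all x, y ∈ Ω and all t ∈ [0, t₀]. -/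

import Mathlib

open scoped RealInnerProductSpace
open Set MeasureTheory

noncomputable def lap {n : ℕ} (f : EuclideanSpace ℝ (Fin n) → ℝ) (x : EuclideanSpace ℝ (Fin n)) : ℝ :=
  ∑ i, fderiv ℝ (fun y => fderiv ℝ f y (EuclideanSpace.single i 1)) x
      (EuclideanSpace.single i 1)

/-!
At a negative minimum `(x₀, y₀, t₀)` the two points differ; write `y₀ - x₀ = d • e` with `‖e‖ = 1`
and `W = X y₀ - X x₀`, so that `C = ⟪W, e⟫ + 2ψ(d/2)` there. Three one-variable tests at the
minimum give: `∂ₜC ≤ 0`, since the minimum over `[0, t₀]` is attained at the right end; the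
derivative of `C` along the pair of flow lines `(x₀ + h X(x₀), y₀ + h X(y₀))` vanishes, which
yields `⟪∇_X X(y₀) - ∇_X X(x₀), e⟫ + ψ' ⟪W, e⟫ ≤ 0`; and the second derivative of `C` along
`(x₀ + h v, y₀ + h Rv)`, with `R` the reflection in `e⊥`, is nonnegative, which summed over an
orthonormal basis yields `⟪ΔX(y₀) - ΔX(x₀), e⟫ + 2ψ'' ≥ 0`. Inserting these and the modulus of
expansion into the equation for `X` and the differential inequality for `ψ` gives
`0 ≥ ∂ₜC ≥ 2ψ' (⟪W, e⟫ + 2ψ) = 2ψ' C > 0`.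
-/

open Filter Topology

theorem HasDerivWithinAt.nonpos_of_isMinOn_Icc_right {f : ℝ → ℝ} {a b m : ℝ} (hab : a < b)
    (hf : HasDerivWithinAt f m (Icc a b) b) (hmin : IsMinOn f (Icc a b) b) : m ≤ 0 := by
  have hcone : a - b ∈ posTangentConeAt (Icc a b) b :=
    sub_mem_posTangentConeAt_of_segment_subset (by rw [segment_symm, segment_eq_Icc hab.le])
  have := hmin.localize.hasFDerivWithinAt_nonneg hf.hasFDerivWithinAt hcone
  rw [ContinuousLinearMap.toSpanSingleton_apply, smul_eq_mul] at this
  exact nonpos_of_mul_nonneg_right this (sub_neg.2 hab)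

theorem IsLocalMin.nonneg_of_hasDerivAt_deriv {g g' : ℝ → ℝ} {a m : ℝ} (hmin : IsLocalMin g a)
    (hg : ∀ᶠ x in 𝓝 a, HasDerivAt g (g' x) x) (hg' : HasDerivAt g' m a) : 0 ≤ m := by
  by_contra! hm
  have hderiv : deriv g =ᶠ[𝓝 a] g' := hg.mono fun x hx => hx.deriv
  have hd2 : deriv (deriv g) a = m := hderiv.deriv_eq.trans hg'.deriv
  -- if `m < 0` then `a` is also a local maximum, so `g` is locally constant
  have hmax : IsLocalMax g a := isLocalMax_of_deriv_deriv_neg (hd2 ▸ hm)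
    (hderiv.eq_of_nhds.trans (hmin.hasDerivAt_eq_zero hg.self_of_nhds)) hg.self_of_nhds.continuousAt
  have hconst : g =ᶠ[𝓝 a] fun _ => g a := (hmin.and hmax).mono fun x hx => le_antisymm hx.2 hx.1
  have : deriv (deriv g) a = 0 := by
    rw [hconst.deriv.deriv_eq]
    simp
  linarith

theorem hasDerivAt_line {G : Type*} [NormedAddCommGroup G] [NormedSpace ℝ G] (z v : G) (h : ℝ) :
    HasDerivAt (fun h : ℝ => z + h • v) v h := by
  simpa using ((hasDerivAt_id h).smul_const v).const_add z

theorem HasDerivAt.norm {F : Type*} [NormedAddCommGroup F] [InnerProductSpace ℝ F]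
    {p : ℝ → F} {w : F} {h : ℝ} (hp : HasDerivAt p w h) (h0 : p h ≠ 0) :
    HasDerivAt (fun h => ‖p h‖) (⟪p h, w⟫ / ‖p h‖) h := by
  have hsq := (Real.hasDerivAt_sqrt (pow_pos (norm_pos_iff.2 h0) 2).ne').comp h hp.norm_sq
  simp only [Function.comp_def, Real.sqrt_sq (norm_nonneg _)] at hsq
  exact hsq.congr_deriv (by field_simp)

theorem IsLocalMin.comp_line_pair {F : Type*} [NormedAddCommGroup F] [NormedSpace ℝ F]
    {f : F × F → ℝ} {x₀ y₀ : F} (hmin : IsLocalMin f (x₀, y₀)) (a b : F) :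
    IsLocalMin (fun h : ℝ => f (x₀ + h • a, y₀ + h • b)) 0 := by
  have hg : ContinuousAt (fun h : ℝ => (x₀ + h • a, y₀ + h • b)) 0 := by fun_prop
  exact IsLocalMin.comp_continuous (by simpa using hmin) hg

section Lines

variable {G H : Type*} [NormedAddCommGroup G] [NormedSpace ℝ G] [NormedAddCommGroup H]
  [NormedSpace ℝ H] {f : G → H} {z : G}

theorem DifferentiableAt.hasDerivAt_comp_line (hf : DifferentiableAt ℝ f z) (v : G) :
    HasDerivAt (fun h : ℝ => f (z + h • v)) (fderiv ℝ f z v) 0 := by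
  have hf' : HasFDerivAt f (fderiv ℝ f z) (z + (0 : ℝ) • v) := by simpa using hf.hasFDerivAt
  exact hf'.comp_hasDerivAt 0 (hasDerivAt_line z v 0)

theorem ContDiffAt.eventually_hasDerivAt_comp_line (hf : ContDiffAt ℝ 1 f z) (v : G) :
    ∀ᶠ h in 𝓝 (0 : ℝ), HasDerivAt (fun h => f (z + h • v)) (fderiv ℝ f (z + h • v) v) h := by
  have hline : Tendsto (fun h : ℝ => z + h • v) (𝓝 0) (𝓝 z) := by
    simpa using (hasDerivAt_line z v 0).continuousAt.tendsto
  filter_upwards [hline.eventually (hf.eventually (by simp))] with h hh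
  exact (hh.differentiableAt (by simp)).hasFDerivAt.comp_hasDerivAt h (hasDerivAt_line z v h)

theorem ContDiffAt.hasDerivAt_fderiv_line (hf : ContDiffAt ℝ 2 f z) (v w : G) :
    HasDerivAt (fun h : ℝ => fderiv ℝ f (z + h • v) w) (fderiv ℝ (fderiv ℝ f) z v w) 0 :=
  (ContinuousLinearMap.apply ℝ H w).hasFDerivAt.comp_hasDerivAt 0
    (((hf.fderiv_right (m := 1) (by norm_num)).differentiableAt (by norm_num)).hasDerivAt_comp_line
      v)

end Lines

theorem OrthonormalBasis.sum_apply_reflection {ι F G : Type*} [Fintype ι] [NormedAddCommGroup F]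
    [InnerProductSpace ℝ F] [NormedAddCommGroup G] [NormedSpace ℝ G]
    (b : OrthonormalBasis ι ℝ F) (B : F →L[ℝ] F →L[ℝ] G) {e : F} (he : ‖e‖ = 1) :
    ∑ i, B (b i - (2 * ⟪b i, e⟫) • e) (b i - (2 * ⟪b i, e⟫) • e) = ∑ i, B (b i) (b i) := by
  have hexpand : ∀ i, B (b i - (2 * ⟪b i, e⟫) • e) (b i - (2 * ⟪b i, e⟫) • e)
      = B (b i) (b i) - 2 • B (⟪b i, e⟫ • b i) e - 2 • B e (⟪b i, e⟫ • b i)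
        + ⟪b i, e⟫ ^ 2 • (4 • B e e) := by
    intro i
    simp only [map_sub, map_smul, sub_apply, smul_apply]
    module
  simp only [hexpand, Finset.sum_add_distrib, Finset.sum_sub_distrib, ← Finset.smul_sum,
    ← map_sum, ← sum_apply, ← Finset.sum_smul, b.sum_repr', b.sum_sq_inner_right, he, one_pow]
  module

section TwoPoint

variable {F : Type*} [NormedAddCommGroup F] [InnerProductSpace ℝ F]
  {Y : F → F} {φ : ℝ → ℝ} {x₀ y₀ e : F} {d : ℝ}

/-- The paper's `C(x, y, t)` at a fixed time `t`, for `x ≠ y`. -/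
noncomputable def twoPointFun (Y : F → F) (φ : ℝ → ℝ) (x y : F) : ℝ :=
  ⟪Y y - Y x, ‖y - x‖⁻¹ • (y - x)⟫ + 2 * φ (‖y - x‖ / 2)

theorem twoPointFun_eq_of_sub_eq_smul {x y : F} (hd : 0 < d) (he : ‖e‖ = 1)
    (hxy : y - x = d • e) : twoPointFun Y φ x y = ⟪Y y - Y x, e⟫ + 2 * φ (d / 2) := by
  have hn : ‖y - x‖ = d := by rw [hxy, norm_smul, he, mul_one, Real.norm_of_nonneg hd.le]
  rw [twoPointFun, hn, hxy, inv_smul_smul₀ hd.ne']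

theorem hasDerivAt_twoPointFun_line (hx : DifferentiableAt ℝ Y x₀) (hy : DifferentiableAt ℝ Y y₀)
    {φ' : ℝ} (hφ : HasDerivAt φ φ' (d / 2)) (hd : 0 < d) (he : ‖e‖ = 1) (hxy : y₀ - x₀ = d • e)
    (a b : F) :
    HasDerivAt (fun h : ℝ => twoPointFun Y φ (x₀ + h • a) (y₀ + h • b))
      (⟪fderiv ℝ Y y₀ b - fderiv ℝ Y x₀ a, e⟫
        + (⟪Y y₀ - Y x₀, b - a⟫ - ⟪Y y₀ - Y x₀, e⟫ * ⟪b - a, e⟫) / d + φ' * ⟪b - a, e⟫) 0 := by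
  set p : ℝ → F := fun h => y₀ + h • b - (x₀ + h • a)
  have hp : HasDerivAt p (b - a) 0 := (hasDerivAt_line y₀ b 0).sub (hasDerivAt_line x₀ a 0)
  have hp0 : p 0 = d • e := by simp [p, hxy]
  have hn0 : ‖p 0‖ = d := by rw [hp0, norm_smul, he, mul_one, Real.norm_of_nonneg hd.le]
  have hnorm : HasDerivAt (fun h => ‖p h‖) ⟪b - a, e⟫ 0 :=
    (hp.norm (by rw [← hn0] at hd; exact norm_pos_iff.1 hd)).congr_deriv (by
      rw [hn0, hp0, real_inner_smul_left, real_inner_comm]; field_simp)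
  have hφ0 : HasDerivAt φ φ' (‖p 0‖ / 2) := by rwa [hn0]
  have hdir := ((hy.hasDerivAt_comp_line b).sub (hx.hasDerivAt_comp_line a)).inner ℝ
    ((hnorm.inv (by rw [hn0]; exact hd.ne')).smul hp)
  refine (hdir.add ((hφ0.comp 0 (hnorm.div_const 2)).const_mul 2)).congr_deriv ?_
  simp only [Pi.sub_apply, Pi.inv_apply, Pi.smul_apply', zero_smul, add_zero]
  rw [hn0, hp0]
  simp only [inner_add_right, real_inner_smul_right]
  field_simp
  ring

theorem IsLocalMin.twoPointFun_flow_le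
    (hmin : IsLocalMin (fun p : F × F => twoPointFun Y φ p.1 p.2) (x₀, y₀))
    (hx : DifferentiableAt ℝ Y x₀) (hy : DifferentiableAt ℝ Y y₀) {φ' : ℝ}
    (hφ : HasDerivAt φ φ' (d / 2)) (hd : 0 < d) (he : ‖e‖ = 1) (hxy : y₀ - x₀ = d • e) :
    ⟪fderiv ℝ Y y₀ (Y y₀) - fderiv ℝ Y x₀ (Y x₀), e⟫ + φ' * ⟪Y y₀ - Y x₀, e⟫ ≤ 0 := by
  set W := Y y₀ - Y x₀
  have hcrit := (hmin.comp_line_pair (Y x₀) (Y y₀)).hasDerivAt_eq_zero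
    (hasDerivAt_twoPointFun_line hx hy hφ hd he hxy (Y x₀) (Y y₀))
  have hcs : ⟪W, e⟫ * ⟪W, e⟫ ≤ ⟪W, W⟫ := by
    simpa [real_inner_self_eq_norm_sq, he] using real_inner_mul_inner_self_le W e
  have : 0 ≤ (⟪W, W⟫ - ⟪W, e⟫ * ⟪W, e⟫) / d := div_nonneg (by linarith) hd.le
  linarith

theorem IsLocalMin.twoPointFun_reflected_second_deriv_nonneg
    (hmin : IsLocalMin (fun p : F × F => twoPointFun Y φ p.1 p.2) (x₀, y₀))
    (hx : ContDiffAt ℝ 2 Y x₀) (hy : ContDiffAt ℝ 2 Y y₀) {φ' : ℝ → ℝ} {φ'' : ℝ}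
    (hφ : ∀ᶠ s in 𝓝 (d / 2), HasDerivAt φ (φ' s) s) (hφ' : HasDerivAt φ' φ'' (d / 2))
    (hd : 0 < d) (he : ‖e‖ = 1) (hxy : y₀ - x₀ = d • e) (v : F) :
    0 ≤ ⟪fderiv ℝ (fderiv ℝ Y) y₀ (v - (2 * ⟪v, e⟫) • e) (v - (2 * ⟪v, e⟫) • e)
      - fderiv ℝ (fderiv ℝ Y) x₀ v v, e⟫ + 2 * φ'' * ⟪v, e⟫ ^ 2 := by
  set c := ⟪v, e⟫
  set w := v - (2 * c) • e
  set σ : ℝ → ℝ := fun h => d / 2 - h * c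
  have hσ : ∀ h, HasDerivAt σ (-c) h := fun h => by
    simpa using ((hasDerivAt_id h).mul_const c).const_sub (d / 2)
  have hσ0 : σ 0 = d / 2 := by simp [σ]
  have hσlim : Tendsto σ (𝓝 0) (𝓝 (d / 2)) := hσ0 ▸ (hσ 0).continuousAt.tendsto
  -- along the reflected pair `y - x` stays a positive multiple of `e`, so the direction is frozen
  have hpath : ∀ h : ℝ, y₀ + h • w - (x₀ + h • v) = (2 * σ h) • e := fun h => by
    rw [eq_add_of_sub_eq' hxy]
    simp only [w, σ]
    module
  set g : ℝ → ℝ := fun h => ⟪Y (y₀ + h • w) - Y (x₀ + h • v), e⟫ + 2 * φ (σ h)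
  have hg : IsLocalMin g 0 := by
    refine (hmin.comp_line_pair v w).congr ?_
    filter_upwards [hσlim.eventually (eventually_gt_nhds (half_pos hd))] with h hh
    rw [twoPointFun_eq_of_sub_eq_smul (by linarith) he (hpath h),
      mul_div_cancel_left₀ _ two_ne_zero]
  have hg' : ∀ᶠ h in 𝓝 0, HasDerivAt g
      (⟪fderiv ℝ Y (y₀ + h • w) w - fderiv ℝ Y (x₀ + h • v) v, e⟫ + 2 * (φ' (σ h) * -c)) h := by
    filter_upwards [(hy.of_le one_le_two).eventually_hasDerivAt_comp_line w,
      (hx.of_le one_le_two).eventually_hasDerivAt_comp_line v, hσlim.eventually hφ]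
      with h hyh hxh hφh
    exact (((hyh.sub hxh).inner ℝ (hasDerivAt_const h e)).add
      ((hφh.comp h (hσ h)).const_mul 2)).congr_deriv (by simp)
  have hg'' := ((hy.hasDerivAt_fderiv_line w w).sub (hx.hasDerivAt_fderiv_line v v)).inner ℝ
    (hasDerivAt_const 0 e) |>.add ((((hσ0 ▸ hφ').comp 0 (hσ 0)).mul_const (-c)).const_mul 2)
  have := hg.nonneg_of_hasDerivAt_deriv hg' hg''
  simp only [inner_zero_right, zero_add] at this
  linarith [show 2 * (φ'' * -c * -c) = 2 * φ'' * c ^ 2 by ring]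

theorem IsLocalMin.twoPointFun_laplacian_nonneg {ι : Type*} [Fintype ι] (b : OrthonormalBasis ι ℝ F)
    (hmin : IsLocalMin (fun p : F × F => twoPointFun Y φ p.1 p.2) (x₀, y₀))
    (hx : ContDiffAt ℝ 2 Y x₀) (hy : ContDiffAt ℝ 2 Y y₀) {φ' : ℝ → ℝ} {φ'' : ℝ}
    (hφ : ∀ᶠ s in 𝓝 (d / 2), HasDerivAt φ (φ' s) s) (hφ' : HasDerivAt φ' φ'' (d / 2))
    (hd : 0 < d) (he : ‖e‖ = 1) (hxy : y₀ - x₀ = d • e) :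
    0 ≤ ⟪∑ i, fderiv ℝ (fderiv ℝ Y) y₀ (b i) (b i) - ∑ i, fderiv ℝ (fderiv ℝ Y) x₀ (b i) (b i), e⟫
      + 2 * φ'' := by
  have hsum := Finset.sum_nonneg fun i (_ : i ∈ Finset.univ) =>
    hmin.twoPointFun_reflected_second_deriv_nonneg hx hy hφ hφ' hd he hxy (b i)
  rwa [Finset.sum_add_distrib, ← sum_inner, Finset.sum_sub_distrib, b.sum_apply_reflection _ he,
    ← Finset.mul_sum, b.sum_sq_inner_right, he, one_pow, mul_one] at hsum

theorem hasDerivWithinAt_twoPointFun_time {X : F → ℝ → F} {ψ : ℝ → ℝ → ℝ} {s : Set ℝ}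
    {t₀ ψt : ℝ} {vx vy : F} (hx : HasDerivWithinAt (X x₀) vx s t₀)
    (hy : HasDerivWithinAt (X y₀) vy s t₀) (hψ : HasDerivWithinAt (ψ (d / 2)) ψt s t₀)
    (hd : 0 < d) (he : ‖e‖ = 1) (hxy : y₀ - x₀ = d • e) :
    HasDerivWithinAt (fun t => twoPointFun (X · t) (ψ · t) x₀ y₀) (⟪vy - vx, e⟫ + 2 * ψt) s t₀ := by
  have hfun : (fun t => twoPointFun (X · t) (ψ · t) x₀ y₀)
      = fun t => ⟪X y₀ t - X x₀ t, e⟫ + 2 * ψ (d / 2) t :=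
    funext fun t => twoPointFun_eq_of_sub_eq_smul hd he hxy
  have h := ((hy.sub hx).inner ℝ (hasDerivWithinAt_const t₀ s e)).add (hψ.const_mul 2)
  rw [inner_zero_right, zero_add] at h
  rwa [hfun]

end TwoPoint

theorem IsOpen.dist_lt_diam {F : Type*} [NormedAddCommGroup F] [NormedSpace ℝ F] {Ω : Set F}
    (hΩ : IsOpen Ω) (hbd : Bornology.IsBounded Ω) {x y : F} (hx : x ∈ Ω) (hy : y ∈ Ω)
    (hne : x ≠ y) : dist x y < Metric.diam Ω := by
  obtain ⟨ε, hε, hball⟩ := Metric.isOpen_iff.1 hΩ y hy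
  set u := ‖y - x‖⁻¹ • (y - x)
  have hu : ‖u‖ = 1 := norm_smul_inv_norm (sub_ne_zero.2 hne.symm)
  have hy' : y + (ε / 2) • u ∈ Ω := hball (by simp [norm_smul, hu, abs_of_pos hε]; linarith)
  have hdist : dist x (y + (ε / 2) • u) = dist x y + ε / 2 := by
    have : y + (ε / 2) • u - x = (‖y - x‖ + ε / 2) • u := by
      rw [add_smul, smul_inv_smul₀ (norm_ne_zero_iff.2 (sub_ne_zero.2 hne.symm))]; abel
    rw [dist_eq_norm', this, norm_smul, hu, mul_one, Real.norm_of_nonneg (by positivity),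
      dist_eq_norm']
  linarith [Metric.dist_le_diam_of_mem hbd hx hy']

section Coordinates

variable {ι : Type*} [Fintype ι]

theorem EuclideanSpace.derivWithin_apply {f : ℝ → EuclideanSpace ℝ ι} {s : Set ℝ} {t : ℝ}
    (hf : DifferentiableWithinAt ℝ f s t) (hs : UniqueDiffWithinAt ℝ s t) (k : ι) :
    derivWithin (fun τ => f τ k) s t = derivWithin f s t k :=
  ((EuclideanSpace.proj (𝕜 := ℝ) k).hasFDerivAt.comp_hasDerivWithinAt t
    hf.hasDerivWithinAt).derivWithin hs

theorem EuclideanSpace.fderiv_apply {G : Type*} [NormedAddCommGroup G] [NormedSpace ℝ G]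
    {f : G → EuclideanSpace ℝ ι} {z : G} (hf : DifferentiableAt ℝ f z) (k : ι) (v : G) :
    fderiv ℝ (fun y => f y k) z v = fderiv ℝ f z v k :=
  congrArg (· v) ((EuclideanSpace.proj (𝕜 := ℝ) k).hasFDerivAt.comp z hf.hasFDerivAt).fderiv

theorem EuclideanSpace.sum_mul_apply_single [DecidableEq ι] (ℓ : EuclideanSpace ℝ ι →L[ℝ] ℝ)
    (w : EuclideanSpace ℝ ι) : ∑ j, w j * ℓ (EuclideanSpace.single j 1) = ℓ w := by
  conv_rhs => rw [← (EuclideanSpace.basisFun ι ℝ).sum_repr' w]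
  simp [map_sum, EuclideanSpace.inner_single_left]

end Coordinates

section Laplacian

variable {n : ℕ}

theorem lap_apply_eq {Y : EuclideanSpace ℝ (Fin n) → EuclideanSpace ℝ (Fin n)}
    {z : EuclideanSpace ℝ (Fin n)} (hY : ContDiffAt ℝ 2 Y z) (k : Fin n) :
    lap (fun y => Y y k) z = (∑ i, fderiv ℝ (fderiv ℝ Y) z (EuclideanSpace.single i 1)
      (EuclideanSpace.single i 1)) k := by
  have hdiff : ∀ᶠ y in 𝓝 z, DifferentiableAt ℝ Y y :=
    (hY.eventually (by simp)).mono fun y hy => hy.differentiableAt (by simp)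
  have hDY : DifferentiableAt ℝ (fderiv ℝ Y) z :=
    (hY.fderiv_right (m := 1) (by norm_num)).differentiableAt (by norm_num)
  rw [lap, WithLp.ofLp_sum, Finset.sum_apply]
  refine Finset.sum_congr rfl fun i _ => ?_
  have hcoord : (fun y => fderiv ℝ (fun y => Y y k) y (EuclideanSpace.single i 1)) =ᶠ[𝓝 z]
      fun y => fderiv ℝ Y y (EuclideanSpace.single i 1) k :=
    hdiff.mono fun y hy => EuclideanSpace.fderiv_apply hy k _
  rw [hcoord.fderiv_eq, EuclideanSpace.fderiv_apply (hDY.clm_apply (differentiableAt_const _)),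
    fderiv_clm_apply hDY (differentiableAt_const _)]
  simp

theorem hasDerivWithinAt_of_forall_coord
    {X : EuclideanSpace ℝ (Fin n) → ℝ → EuclideanSpace ℝ (Fin n)} {v : EuclideanSpace ℝ (Fin n)}
    {s : Set ℝ} {t : ℝ} {z : EuclideanSpace ℝ (Fin n)} (hXt : DifferentiableWithinAt ℝ (X z) s t)
    (hs : UniqueDiffWithinAt ℝ s t) (hXx : ContDiffAt ℝ 2 (fun x => X x t) z)
    (heq : ∀ k : Fin n, derivWithin (fun τ => X z τ k) s t - lap (fun y => X y t k) z =
      -2 * ∑ j, X z t j * fderiv ℝ (fun y => X y t k) z (EuclideanSpace.single j 1) + v k) :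
    HasDerivWithinAt (X z) (∑ i, fderiv ℝ (fderiv ℝ (fun x => X x t)) z
        (EuclideanSpace.single i 1) (EuclideanSpace.single i 1)
      - (2 : ℝ) • fderiv ℝ (fun x => X x t) z (X z t) + v) s t := by
  refine hXt.hasDerivWithinAt.congr_deriv ?_
  have hdiff : DifferentiableAt ℝ (fun x => X x t) z := hXx.differentiableAt (by simp)
  ext k
  have h := heq k
  rw [EuclideanSpace.derivWithin_apply hXt hs, lap_apply_eq hXx,
    EuclideanSpace.sum_mul_apply_single, EuclideanSpace.fderiv_apply hdiff] at h
  simp only [PiLp.add_apply, PiLp.sub_apply, PiLp.smul_apply, smul_eq_mul]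
  linarith

end Laplacian

theorem stmt_2_general {n : ℕ} (Ω : Set (EuclideanSpace ℝ (Fin n)))
    (hΩ : IsOpen Ω) (hbd : Bornology.IsBounded Ω)
    (D T : ℝ) (hD : Metric.diam Ω = D) (hT : 0 < T)
    (X : EuclideanSpace ℝ (Fin n) → ℝ → EuclideanSpace ℝ (Fin n))
    (V : EuclideanSpace ℝ (Fin n) → EuclideanSpace ℝ (Fin n) → EuclideanSpace ℝ (Fin n)) (ω : ℝ → ℝ)
    (hXx : ∀ t ∈ Icc (0:ℝ) T, ContDiffOn ℝ 2 (fun x => X x t) Ω)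
    (hXt : ∀ x ∈ Ω, ContDiffOn ℝ 1 (X x) (Icc (0:ℝ) T))
    (heq : ∀ x ∈ Ω, ∀ t ∈ Icc (0:ℝ) T, ∀ k : Fin n,
      derivWithin (fun τ => X x τ k) (Icc (0:ℝ) T) t - lap (fun y => X y t k) x =
      -2 * ∑ j, X x t j * fderiv ℝ (fun y => X y t k) x (EuclideanSpace.single j 1)
        + V x (X x t) k)
    (hVexp : ∀ t ∈ Icc (0:ℝ) T, ∀ x ∈ Ω, ∀ y ∈ Ω, x ≠ y →
      2 * ω (‖y - x‖ / 2) ≤ ⟪V y (X y t) - V x (X x t), ‖y - x‖⁻¹ • (y - x)⟫)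
    (ψ ψs ψss ψt : ℝ → ℝ → ℝ)
    (hψds : ∀ t ∈ Icc (0:ℝ) T, ∀ s ∈ Ico (0:ℝ) (D/2),
      HasDerivWithinAt (fun σ => ψ σ t) (ψs s t) (Ico (0:ℝ) (D/2)) s)
    (hψdss : ∀ t ∈ Icc (0:ℝ) T, ∀ s ∈ Ico (0:ℝ) (D/2),
      HasDerivWithinAt (fun σ => ψs σ t) (ψss s t) (Ico (0:ℝ) (D/2)) s)
    (hψdt : ∀ s ∈ Ico (0:ℝ) (D/2), ∀ t ∈ Icc (0:ℝ) T,
      HasDerivWithinAt (fun τ => ψ s τ) (ψt s t) (Icc (0:ℝ) T) t)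
    (hψneg : ∀ s ∈ Ico (0:ℝ) (D/2), ∀ t ∈ Icc (0:ℝ) T, ψs s t < 0)
    (hODE : ∀ s ∈ Ico (0:ℝ) (D/2), ∀ t ∈ Icc (0:ℝ) T,
      ψt s t - ψss s t ≥ 2 * ψs s t * ψ s t - ω s)
    (C : EuclideanSpace ℝ (Fin n) → EuclideanSpace ℝ (Fin n) → ℝ → ℝ)
    (hCdiag : ∀ x t, C x x t = 0)
    (hC : ∀ x y t, x ≠ y → C x y t =
      ⟪X y t - X x t, ‖y - x‖⁻¹ • (y - x)⟫ + 2 * ψ (‖y - x‖ / 2) t) :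
    ¬ ∃ x₀ ∈ Ω, ∃ y₀ ∈ Ω, ∃ t₀ ∈ Ioc (0:ℝ) T, C x₀ y₀ t₀ < 0 ∧
      ∀ x ∈ Ω, ∀ y ∈ Ω, ∀ t ∈ Icc (0:ℝ) t₀, C x₀ y₀ t₀ ≤ C x y t := by
  rintro ⟨x₀, hx₀, y₀, hy₀, t₀, ht₀, hneg, hmin⟩
  have ht₀T : t₀ ∈ Icc (0 : ℝ) T := ⟨ht₀.1.le, ht₀.2⟩
  have hne : x₀ ≠ y₀ := by rintro rfl; exact hneg.ne (hCdiag x₀ t₀)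
  set d := ‖y₀ - x₀‖
  set e := d⁻¹ • (y₀ - x₀)
  have hd : 0 < d := norm_pos_iff.2 (sub_ne_zero.2 hne.symm)
  have he : ‖e‖ = 1 := norm_smul_inv_norm (sub_ne_zero.2 hne.symm)
  have hxy : y₀ - x₀ = d • e := (smul_inv_smul₀ hd.ne' _).symm
  have hs₀ : d / 2 ∈ Ioo 0 (D / 2) := by
    have := hΩ.dist_lt_diam hbd hx₀ hy₀ hne
    rw [hD, dist_eq_norm'] at this
    exact ⟨half_pos hd, by linarith⟩
  have hY : ∀ z ∈ Ω, ContDiffAt ℝ 2 (fun x => X x t₀) z := fun z hz =>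
    (hXx t₀ ht₀T).contDiffAt (hΩ.mem_nhds hz)
  have hloc : IsLocalMin (fun p => twoPointFun (fun x => X x t₀) (fun s => ψ s t₀) p.1 p.2)
      (x₀, y₀) := by
    filter_upwards [((hΩ.prod hΩ).inter (isOpen_ne_fun continuous_fst continuous_snd)).mem_nhds
      ⟨⟨hx₀, hy₀⟩, hne⟩] with p ⟨⟨hx, hy⟩, hxy⟩
    exact (hC _ _ _ hne).symm.trans_le
      ((hmin _ hx _ hy t₀ ⟨ht₀T.1, le_rfl⟩).trans_eq (hC _ _ _ hxy))
  have hψs : ∀ᶠ s in 𝓝 (d / 2), HasDerivAt (fun s => ψ s t₀) (ψs s t₀) s := by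
    filter_upwards [Ioo_mem_nhds hs₀.1 hs₀.2] with s hs
    exact (hψds t₀ ht₀T s (Ioo_subset_Ico_self hs)).hasDerivAt (Ico_mem_nhds hs.1 hs.2)
  have hψss : HasDerivAt (fun s => ψs s t₀) (ψss (d / 2) t₀) (d / 2) :=
    (hψdss t₀ ht₀T _ (Ioo_subset_Ico_self hs₀)).hasDerivAt (Ico_mem_nhds hs₀.1 hs₀.2)
  have hflow := hloc.twoPointFun_flow_le ((hY x₀ hx₀).differentiableAt (by simp))
    ((hY y₀ hy₀).differentiableAt (by simp)) hψs.self_of_nhds hd he hxy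
  have hlap := hloc.twoPointFun_laplacian_nonneg (EuclideanSpace.basisFun (Fin n) ℝ) (hY x₀ hx₀)
    (hY y₀ hy₀) hψs hψss hd he hxy
  simp only [EuclideanSpace.basisFun_apply] at hlap
  have hpde : ∀ z ∈ Ω, HasDerivWithinAt (X z) _ (Icc 0 T) t₀ := fun z hz =>
    hasDerivWithinAt_of_forall_coord (((hXt z hz).differentiableOn one_ne_zero) t₀ ht₀T)
      (uniqueDiffOn_Icc hT t₀ ht₀T) (hY z hz) (heq z hz t₀ ht₀T)
  have htime := ((hasDerivWithinAt_twoPointFun_time (hpde x₀ hx₀) (hpde y₀ hy₀)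
    (hψdt _ (Ioo_subset_Ico_self hs₀) t₀ ht₀T) hd he hxy).mono
    (Icc_subset_Icc_right ht₀.2)).nonpos_of_isMinOn_Icc_right ht₀.1
    fun t ht => (hC _ _ _ hne).symm.trans_le ((hmin _ hx₀ _ hy₀ t ht).trans_eq (hC _ _ _ hne))
  have hCneg : ⟪X y₀ t₀ - X x₀ t₀, e⟫ + 2 * ψ (d / 2) t₀ < 0 :=
    (twoPointFun_eq_of_sub_eq_smul (Y := fun x => X x t₀) (φ := fun s => ψ s t₀) hd he
      hxy).symm.trans_lt ((hC x₀ y₀ t₀ hne).symm.trans_lt hneg)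
  have hVe : 2 * ω (d / 2) ≤ ⟪V y₀ (X y₀ t₀) - V x₀ (X x₀ t₀), e⟫ :=
    hVexp t₀ ht₀T x₀ hx₀ y₀ hy₀ hne
  simp only [inner_sub_left, inner_add_left, real_inner_smul_left] at htime hlap hflow hVe hCneg
  linarith [hODE _ (Ioo_subset_Ico_self hs₀) t₀ ht₀T,
    mul_pos_of_neg_of_neg (hψneg _ (Ioo_subset_Ico_self hs₀) t₀ ht₀T) hCneg]

theorem stmt_2 {n : ℕ} (Ω : Set (EuclideanSpace ℝ (Fin n)))
    (hΩ : IsOpen Ω) (hconn : IsConnected Ω) (hbd : Bornology.IsBounded Ω)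
    (D T : ℝ) (hD : Metric.diam Ω = D) (hT : 0 < T)
    (X : EuclideanSpace ℝ (Fin n) → ℝ → EuclideanSpace ℝ (Fin n))
    (V : EuclideanSpace ℝ (Fin n) → EuclideanSpace ℝ (Fin n) → EuclideanSpace ℝ (Fin n)) (ω : ℝ → ℝ)
    (hXx : ∀ t ∈ Icc (0:ℝ) T, ContDiffOn ℝ 2 (fun x => X x t) Ω)
    (hXt : ∀ x ∈ Ω, ContDiffOn ℝ 1 (X x) (Icc (0:ℝ) T))
    (hV : ContDiffOn ℝ 1 (fun p : EuclideanSpace ℝ (Fin n) × EuclideanSpace ℝ (Fin n) => V p.1 p.2) (Ω ×ˢ univ))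
    (heq : ∀ x ∈ Ω, ∀ t ∈ Icc (0:ℝ) T, ∀ k : Fin n,
      derivWithin (fun τ => X x τ k) (Icc (0:ℝ) T) t - lap (fun y => X y t k) x =
      -2 * ∑ j, X x t j * fderiv ℝ (fun y => X y t k) x (EuclideanSpace.single j 1)
        + V x (X x t) k)
    (hVexp : ∀ t ∈ Icc (0:ℝ) T, ∀ x ∈ Ω, ∀ y ∈ Ω, x ≠ y →
      2 * ω (‖y - x‖ / 2) ≤ ⟪V y (X y t) - V x (X x t), ‖y - x‖⁻¹ • (y - x)⟫)
    (ψ ψs ψss ψt : ℝ → ℝ → ℝ)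
    (hψ0 : ∀ t ∈ Icc (0:ℝ) T, ψ 0 t = 0)
    (hψds : ∀ t ∈ Icc (0:ℝ) T, ∀ s ∈ Ico (0:ℝ) (D/2),
      HasDerivWithinAt (fun σ => ψ σ t) (ψs s t) (Ico (0:ℝ) (D/2)) s)
    (hψdss : ∀ t ∈ Icc (0:ℝ) T, ∀ s ∈ Ico (0:ℝ) (D/2),
      HasDerivWithinAt (fun σ => ψs σ t) (ψss s t) (Ico (0:ℝ) (D/2)) s)
    (hψdt : ∀ s ∈ Ico (0:ℝ) (D/2), ∀ t ∈ Icc (0:ℝ) T,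
      HasDerivWithinAt (fun τ => ψ s τ) (ψt s t) (Icc (0:ℝ) T) t)
    (hψneg : ∀ s ∈ Ico (0:ℝ) (D/2), ∀ t ∈ Icc (0:ℝ) T, ψs s t < 0)
    (hODE : ∀ s ∈ Ico (0:ℝ) (D/2), ∀ t ∈ Icc (0:ℝ) T,
      ψt s t - ψss s t ≥ 2 * ψs s t * ψ s t - ω s)
    (C : EuclideanSpace ℝ (Fin n) → EuclideanSpace ℝ (Fin n) → ℝ → ℝ)
    (hCdiag : ∀ x t, C x x t = 0)
    (hC : ∀ x y t, x ≠ y → C x y t =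
      ⟪X y t - X x t, ‖y - x‖⁻¹ • (y - x)⟫ + 2 * ψ (‖y - x‖ / 2) t) :
    ¬ ∃ x₀ ∈ Ω, ∃ y₀ ∈ Ω, ∃ t₀ ∈ Ioc (0:ℝ) T, C x₀ y₀ t₀ < 0 ∧
      ∀ x ∈ Ω, ∀ y ∈ Ω, ∀ t ∈ Icc (0:ℝ) t₀, C x₀ y₀ t₀ ≤ C x y t :=
  stmt_2_general Ω hΩ hbd D T hD hT X V ω hXx hXt heq hVexp ψ ψs ψss ψt hψds hψdss hψdt hψneg hODE C
    hCdiag hC
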